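/- Let B be a UFD of characteristic zero and Δ any set of locally nilpotent derivations of B. Let A_Δ = ⋂_{D∈Δ} ker D and K_Δ = ⋂_{D∈Δ} Frac(ker D) (intersection inside Frac B). Then Frac(A_Δ) = K_Δ. In particular Frac(ML(B)) = FML(B). -/

import Mathlib

def IsLND {B : Type*} [CommRing B] (D : B → B) : Prop :=
  (∀ a b : B, D (a + b) = D a + D b) ∧
  (∀ a b : B, D (a * b) = a * D b + D a * b) ∧
  (∀ x : B, ∃ n : ℕ, D^[n] x = 0)

/-!
The kernel of a locally nilpotent derivation `D` of a domain of characteristic zero is factorially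
closed: if `D^[p]` and `D^[q]` are the last nonzero iterates on `a` and `b`, the Leibniz rule gives
`D^[p+q] (a * b) = (p+q).choose p • D^[p] a * D^[q] b ≠ 0`, so `D (a * b) = 0` forces `p = 0`.
In a UFD, any fraction `c / d` of elements of a subring `S` is `(num * e) / (den * e)` for the
reduced fraction `num / den`, so when `S` is factorially closed both `num` and `den` lie in `S`.
Applied to every `ker D`, this puts the reduced numerator and denominator of any element of
`⋂ Frac (ker D)` into `⋂ ker D`.
-/

open Finset

theorem Function.exists_iterate_ne_zero_and_iterate_succ_eq_zero {α : Type*} [Zero α]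
    {f : α → α} {x : α} (hx : x ≠ 0) (h : ∃ n, f^[n] x = 0) :
    ∃ p, f^[p] x ≠ 0 ∧ f^[p + 1] x = 0 := by
  by_contra! H
  obtain ⟨n, hn⟩ := h
  have hne : ∀ n, f^[n] x ≠ 0 := fun n => by
    induction n with
    | zero => exact hx
    | succ p hp => exact H p hp
  exact hne n hn

def Subring.IsFactoriallyClosed {B : Type*} [CommRing B] (S : Subring B) : Prop :=
  ∀ ⦃a b : B⦄, a ≠ 0 → b ≠ 0 → a * b ∈ S → a ∈ S

namespace Derivation

variable {R A : Type*} [CommSemiring R]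

section CommSemiring

variable [CommSemiring A] [Algebra R A] (D : Derivation R A A)

theorem iterate_apply_mul (n : ℕ) (a b : A) :
    D^[n] (a * b) = ∑ ij ∈ antidiagonal n, n.choose ij.1 • (D^[ij.1] a * D^[ij.2] b) := by
  induction n with
  | zero => simp
  | succ n ih =>
    rw [sum_antidiagonal_choose_succ_nsmul (fun i j => D^[i] a * D^[j] b) n]
    simp only [Function.iterate_succ_apply', ih, map_sum, map_nsmul, leibniz, smul_eq_mul,
      smul_add, sum_add_distrib]
    congr 1
    refine sum_congr rfl fun ij hij => ?_
    rw [n.choose_symm_of_eq_add (HasAntidiagonal.mem_antidiagonal.1 hij).symm,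
      mul_comm (D^[ij.2] b)]

theorem iterate_eq_zero_of_le {x : A} {m n : ℕ} (hm : D^[m] x = 0) (hmn : m ≤ n) :
    D^[n] x = 0 := by
  rw [← Nat.sub_add_cancel hmn, Function.iterate_add_apply, hm,
    Function.iterate_fixed (map_zero D)]

end CommSemiring

section CommRing

variable [CommRing A] [Algebra R A] (D : Derivation R A A)

def kerSubring : Subring A where
  carrier := {x | D x = 0}
  zero_mem' := map_zero D
  one_mem' := D.map_one_eq_zero
  add_mem' {x y} hx hy := by simp_all
  neg_mem' {x} hx := by simp_all
  mul_mem' {x y} hx hy := by simp_all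

theorem isFactoriallyClosed_kerSubring [IsDomain A] [CharZero A]
    (hD : ∀ x, ∃ n, D^[n] x = 0) : D.kerSubring.IsFactoriallyClosed := by
  intro a b ha hb h
  by_contra hDa
  obtain ⟨p, hpa, hpa'⟩ := Function.exists_iterate_ne_zero_and_iterate_succ_eq_zero ha (hD a)
  obtain ⟨q, hqb, hqb'⟩ := Function.exists_iterate_ne_zero_and_iterate_succ_eq_zero hb (hD b)
  have hp : p ≠ 0 := by rintro rfl; exact hDa hpa'
  have hvanish : D^[p + q] (a * b) = 0 :=
    D.iterate_eq_zero_of_le (m := 1) h (by omega)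
  -- by the Leibniz rule, only the term `(p, q)` survives
  rw [iterate_apply_mul,
    sum_eq_single_of_mem (p, q) (HasAntidiagonal.mem_antidiagonal.2 rfl)] at hvanish
  · rw [nsmul_eq_mul] at hvanish
    exact mul_ne_zero (Nat.cast_ne_zero.2 (Nat.choose_pos (by omega)).ne')
      (mul_ne_zero hpa hqb) hvanish
  · rintro ⟨i, j⟩ hij hne
    rw [HasAntidiagonal.mem_antidiagonal] at hij
    rcases lt_or_ge p i with hi | hi
    · rw [D.iterate_eq_zero_of_le hpa' hi, zero_mul, smul_zero]
    · have hj : q + 1 ≤ j := by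
        by_contra; exact hne (Prod.ext (by omega) (by omega))
      rw [D.iterate_eq_zero_of_le hqb' hj, mul_zero, smul_zero]

end CommRing

end Derivation

theorem Subfield.exists_eq_div_of_mem_closure_image_subring {B L : Type*} [CommRing B]
    [Nontrivial B] [Field L] (φ : B →+* L) (S : Subring B) {x : L}
    (hx : x ∈ Subfield.closure (φ '' S)) :
    ∃ c ∈ S, ∃ d ∈ S, d ≠ 0 ∧ x = φ c / φ d := by
  obtain ⟨y, hy, z, hz, rfl⟩ := Subfield.mem_closure_iff.1 hx
  rw [← Subring.coe_map, Subring.closure_eq] at hy hz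
  obtain ⟨c, hc, rfl⟩ := hy
  obtain ⟨d, hd, rfl⟩ := hz
  by_cases hd0 : d = 0
  · exact ⟨0, S.zero_mem, 1, S.one_mem, one_ne_zero, by simp [hd0]⟩
  · exact ⟨c, hc, d, hd, hd0, rfl⟩

namespace IsFractionRing

variable {B L : Type*} [CommRing B] [IsDomain B] [UniqueFactorizationMonoid B]
  [Field L] [Algebra B L] [IsFractionRing B L]

theorem exists_eq_num_mul_and_eq_den_mul {c d : B} (hd : d ≠ 0) {x : L}
    (hx : x = algebraMap B L c / algebraMap B L d) :
    ∃ e, c = num B x * e ∧ d = den B x * e := by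
  have hden : (den B x : B) ≠ 0 := nonZeroDivisors.coe_ne_zero _
  have hcross : num B x * d = c * den B x := by
    apply IsFractionRing.injective B L
    rw [map_mul, map_mul, ← div_eq_div_iff (by simp) (by simp [hd]), mk'_num_den', hx]
  obtain ⟨e, he⟩ : (den B x : B) ∣ d :=
    (num_den_reduced B x).symm.dvd_of_dvd_mul_left ⟨c, by rw [hcross, mul_comm]⟩
  refine ⟨e, mul_right_cancel₀ hden ?_, he⟩
  rw [← hcross, he]
  ring

theorem num_mem_and_den_mem_of_mem_closure {S : Subring B} (hS : S.IsFactoriallyClosed) {x : L}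
    (hx : x ∈ Subfield.closure (algebraMap B L '' S)) :
    num B x ∈ S ∧ (den B x : B) ∈ S := by
  obtain ⟨c, hc, d, hd, hd0, hxcd⟩ := Subfield.exists_eq_div_of_mem_closure_image_subring _ S hx
  obtain ⟨e, rfl, rfl⟩ := exists_eq_num_mul_and_eq_den_mul hd0 hxcd
  have hden : (den B x : B) ≠ 0 := nonZeroDivisors.coe_ne_zero _
  have he : e ≠ 0 := right_ne_zero_of_mul hd0
  refine ⟨?_, hS hden he hd⟩
  by_cases hnum : num B x = 0
  · exact hnum ▸ S.zero_mem
  · exact hS hnum he hc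

end IsFractionRing

def IsLND.toDerivation {B : Type*} [CommRing B] {D : B → B} (hD : IsLND D) :
    Derivation ℤ B B :=
  Derivation.mk' (AddMonoidHom.mk' D hD.1).toIntLinearMap fun a b => by
    simp [hD.2.1, mul_comm]

/-- If `B` is a UFD of characteristic zero and `Δ` a set of locally nilpotent
derivations of `B`, then inside `L = Frac B` the subfield generated by
`A_Δ = ⋂_{D ∈ Δ} ker D` equals `K_Δ = ⋂_{D ∈ Δ} Frac (ker D)`. -/
theorem stmt13 {B L : Type*} [CommRing B] [IsDomain B] [CharZero B]
    [UniqueFactorizationMonoid B]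
    [Field L] [Algebra B L] [IsFractionRing B L]
    (Δ : Set (B → B)) (hΔ : ∀ D ∈ Δ, IsLND D) :
    Subfield.closure ((algebraMap B L) '' {x : B | ∀ D ∈ Δ, D x = 0}) =
      ⨅ D ∈ Δ, Subfield.closure ((algebraMap B L) '' {x : B | D x = 0}) := by
  refine le_antisymm (le_iInf₂ fun D hD => Subfield.closure_mono (Set.image_mono
    fun x hx => hx D hD)) fun x hx => ?_
  have hmem : ∀ D ∈ Δ, D (IsFractionRing.num B x) = 0 ∧ D (IsFractionRing.den B x) = 0 :=
    fun D hD => IsFractionRing.num_mem_and_den_mem_of_mem_closure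
      ((hΔ D hD).toDerivation.isFactoriallyClosed_kerSubring (hΔ D hD).2.2)
      (Subfield.mem_iInf.1 (Subfield.mem_iInf.1 hx D) hD)
  rw [← IsFractionRing.mk'_num_den' B x]
  exact div_mem (Subfield.subset_closure ⟨_, fun D hD => (hmem D hD).1, rfl⟩)
    (Subfield.subset_closure ⟨_, fun D hD => (hmem D hD).2, rfl⟩)
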